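/- With the extremal setup below, assume further that v₁v_n is the unique negative edge of Γ′ and that x_n ≤ x₁. Then, for all sufficiently large n, any two distinct vertices belonging to N(v₁) \ (N(v_n) ∪ {v_n}) are adjacent in Γ′ (so this set induces a complete subgraph, all of whose edges are positive). -/

import Mathlib

open Matrix

/-- A signed graph of order `n`: a real symmetric `n × n` matrix with zero diagonal
whose off-diagonal entries lie in `{-1, 0, 1}`. -/
def IsSignedGraph {n : ℕ} (A : Matrix (Fin n) (Fin n) ℝ) : Prop :=
  A.IsSymm ∧ (∀ i, A i i = 0) ∧ ∀ i j, A i j = -1 ∨ A i j = 0 ∨ A i j = 1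

/-- The index (largest eigenvalue) of a signed graph. -/
noncomputable def lambdaMax {n : ℕ} (A : Matrix (Fin n) (Fin n) ℝ) : ℝ :=
  sSup (spectrum ℝ A)

/-- The smallest eigenvalue of a signed graph. -/
noncomputable def lambdaMin {n : ℕ} (A : Matrix (Fin n) (Fin n) ℝ) : ℝ :=
  sInf (spectrum ℝ A)

/-- The spectral radius of a signed graph. -/
noncomputable def rho {n : ℕ} (A : Matrix (Fin n) (Fin n) ℝ) : ℝ :=
  max (lambdaMax A) (-(lambdaMin A))

/-- There is a cycle, all of whose vertices lie in `s`, along whose edges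
the product of the entries of `A` is negative. -/
def HasNegCycleOn {n : ℕ} (A : Matrix (Fin n) (Fin n) ℝ) (s : Set (Fin n)) : Prop :=
  ∃ m : ℕ, 3 ≤ m ∧ ∃ c : ℕ → Fin n,
    (∀ i < m, ∀ j < m, c i = c j → i = j) ∧ (∀ i < m, c i ∈ s) ∧
    (∀ i < m, A (c i) (c ((i + 1) % m)) ≠ 0) ∧
    (∏ i ∈ Finset.range m, A (c i) (c ((i + 1) % m))) < 0

/-- A signed graph is unbalanced if it has a negative cycle. -/
def IsUnbalanced {n : ℕ} (A : Matrix (Fin n) (Fin n) ℝ) : Prop :=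
  HasNegCycleOn A Set.univ

/-- An `m`-element set of pairwise adjacent vertices whose induced signed complete
subgraph is unbalanced. -/
def IsKmMinus {n : ℕ} (A : Matrix (Fin n) (Fin n) ℝ) (m : ℕ) (s : Finset (Fin n)) : Prop :=
  s.card = m ∧ (∀ i ∈ s, ∀ j ∈ s, i ≠ j → A i j ≠ 0) ∧ HasNegCycleOn A ↑s

/-- A `K₄⁻` of a signed graph. -/
def IsK4Minus {n : ℕ} (A : Matrix (Fin n) (Fin n) ℝ) (s : Finset (Fin n)) : Prop :=
  IsKmMinus A 4 s

/-- A signed graph is `t𝒦₄⁻`-free if it contains fewer than `t` distinct `K₄⁻`'s. -/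
def TK4Free {n : ℕ} (t : ℕ) (A : Matrix (Fin n) (Fin n) ℝ) : Prop :=
  {s : Finset (Fin n) | IsK4Minus A s}.ncard < t

/-- Switching isomorphism of signed graphs: `B = (PD) A (PD)ᵀ` for a permutation
matrix `P` and a `±1` diagonal matrix `D`. -/
def SwitchIso {n : ℕ} (A B : Matrix (Fin n) (Fin n) ℝ) : Prop :=
  ∃ (σ : Equiv.Perm (Fin n)) (d : Fin n → ℝ), (∀ i, d i = 1 ∨ d i = -1) ∧
    B = (σ.permMatrix ℝ * Matrix.diagonal d) * A * (σ.permMatrix ℝ * Matrix.diagonal d)ᵀ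

/-- The signed graph `Γ_{s,n}`: the vertices `0, …, n-2` are pairwise adjacent,
the last vertex `n-1` is adjacent exactly to `0, …, s`, and every edge is positive
except the single negative edge joining `n-1` and `0`. -/
noncomputable def GammaSN (s n : ℕ) : Matrix (Fin n) (Fin n) ℝ :=
  fun i j =>
    if i = j then 0
    else if i.val ≠ n - 1 ∧ j.val ≠ n - 1 then 1
    else if min i.val j.val = 0 then -1
    else if min i.val j.val ≤ s then 1
    else 0

/-- The signed graph `Σ_{k,n}` with parameter `r`: vertex `0` is `u₁`, vertex `1` is `u₂`,
vertices `2, …, r+1` are `w₁, …, w_r`, vertices `r+2, …, r+k+1` are `q₁, …, q_k`, and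
vertices `r+k+2, …, n-1` are `v₁, …, v_{n-2-r-k}`.  The only negative edge is `u₁u₂`. -/
noncomputable def SigmaKN (r k n : ℕ) : Matrix (Fin n) (Fin n) ℝ :=
  fun i j =>
    if i = j then 0
    else if min i.val j.val = 0 then (if max i.val j.val = 1 then -1 else 1)
    else if min i.val j.val = 1 then (if max i.val j.val ≤ r + k + 1 then 1 else 0)
    else if max i.val j.val ≤ r + 1 then 1
    else if max i.val j.val ≤ r + k + 1 then 0
    else 1

/-!
Comparison with `Γ_{2,n}`, which is unbalanced and has a single `K₄⁻`, gives `λ₁(Γ′) > n - 2`;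
a row-sum estimate then makes every entry of the nonnegative eigenvector `x` positive.
If two vertices `i ≠ j` outside `N(v_n) ∪ {v_n}` were not adjacent, adding the positive edge
`ij` would keep the graph unbalanced and create no new `K₄⁻` (every `K₄⁻` contains the unique
negative edge `v₁v_n`, hence lies in `N(v_n) ∪ {v_n}`), while raising the Rayleigh quotient at
`x` by `2 xᵢ xⱼ > 0`, contradicting maximality. A negative entry `A i j` would be a second
negative edge.
-/

section Spectral

variable {n : ℕ}

open scoped MatrixOrder in
lemma dotProduct_mulVec_le_lambdaMax {B : Matrix (Fin n) (Fin n) ℝ} (hB : B.IsSymm)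
    (y : Fin n → ℝ) : y ⬝ᵥ B *ᵥ y ≤ lambdaMax B * (y ⬝ᵥ y) := by
  have hH : B.IsHermitian := by rwa [IsHermitian, conjTranspose_eq_transpose_of_trivial]
  have hle : B ≤ algebraMap ℝ _ (lambdaMax B) :=
    le_algebraMap_of_spectrum_le
      (fun _ h => le_csSup (finite_real_spectrum (A := B)).bddAbove h) hH.isSelfAdjoint
  simpa only [star_trivial, Algebra.algebraMap_eq_smul_one, sub_mulVec, smul_mulVec, one_mulVec,
    dotProduct_sub, dotProduct_smul, smul_eq_mul, sub_nonneg]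
    using (le_iff.mp hle).dotProduct_mulVec_nonneg y

/-- The Rayleigh quotient of the vector equal to `1` off `v` and to `c = σ / n` at `v` is
`((n - 1)(n - 2) + 2cσ) / (n - 1 + c²)`, which exceeds `n - 2` as soon as `0 < c < 2σ / (n - 2)`. -/
lemma sub_two_lt_lambdaMax {B : Matrix (Fin n) (Fin n) ℝ} (hB : B.IsSymm)
    (hdiag : ∀ a, B a a = 0) {v : Fin n} (hcomplete : ∀ a b, a ≠ b → a ≠ v → b ≠ v → B a b = 1)
    (hrow : 0 < ∑ b, B v b) : (n : ℝ) - 2 < lambdaMax B := by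
  set σ : ℝ := ∑ b, B v b
  set c : ℝ := σ / n
  set y : Fin n → ℝ := fun a => if a = v then c else 1
  have hBy_v : (B *ᵥ y) v = σ := by
    simp only [mulVec, dotProduct, σ]
    refine Finset.sum_congr rfl fun b _ => ?_
    by_cases hbv : b = v
    · simp [hbv, hdiag]
    · simp [y, hbv]
  have hBy : ∀ a ≠ v, (B *ᵥ y) a = (n - 2) + c * B v a := by
    intro a hav
    have hterm : ∀ b, B a b * y b =
        1 + (if b = a then -1 else 0) + (if b = v then c * B v a - 1 else 0) := by
      intro b
      by_cases hba : b = a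
      · simp [hba, hav, hdiag, y]
      by_cases hbv : b = v
      · simp [hbv, Ne.symm hav, y, ← hB.apply v a, mul_comm]
      · simp [y, hba, hbv, hcomplete a b (Ne.symm hba) hav hbv]
    simp only [mulVec, dotProduct, hterm, Finset.sum_add_distrib, Finset.sum_ite_eq',
      Finset.mem_univ, if_true, Finset.sum_const, Finset.card_univ, Fintype.card_fin]
    ring
  have hyBy : y ⬝ᵥ B *ᵥ y = (n - 1) * (n - 2) + 2 * c * σ := by
    have hterm : ∀ a, y a * (B *ᵥ y) a =
        (n - 2) + c * B v a + if a = v then c * σ - (n - 2) else 0 := by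
      intro a
      by_cases hav : a = v
      · simp [hav, hBy_v, y, hdiag]
      · simp [hav, hBy a hav, y]
    simp only [dotProduct, hterm, Finset.sum_add_distrib, Finset.sum_ite_eq',
      Finset.mem_univ, if_true, Finset.sum_const, Finset.card_univ, Fintype.card_fin,
      nsmul_eq_mul, ← Finset.mul_sum]
    ring
  have hyy : y ⬝ᵥ y = n - 1 + c ^ 2 := by
    have hterm : ∀ a, y a * y a = 1 + if a = v then c ^ 2 - 1 else 0 := by
      intro a
      by_cases hav : a = v
      · simp [hav, y, sq]
      · simp [hav, y]
    simp only [dotProduct, hterm, Finset.sum_add_distrib, Finset.sum_ite_eq',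
      Finset.mem_univ, if_true, Finset.sum_const, Finset.card_univ, Fintype.card_fin,
      nsmul_eq_mul, mul_one]
    ring
  have hn : (1 : ℝ) ≤ n := by exact_mod_cast Fin.pos v
  have hc : 0 < c := by positivity
  have key := dotProduct_mulVec_le_lambdaMax hB y
  rw [hyBy, hyy] at key
  by_contra! hle
  have : lambdaMax B * (n - 1 + c ^ 2) ≤ (n - 2) * (n - 1 + c ^ 2) :=
    mul_le_mul_of_nonneg_right hle (by positivity)
  have hσ : c * n = σ := div_mul_cancel₀ σ (zero_lt_one.trans_le hn).ne'
  nlinarith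

end Spectral

section Cycles

variable {n : ℕ} {A B : Matrix (Fin n) (Fin n) ℝ}

lemma HasNegCycleOn.exists_neg_entry {s : Set (Fin n)} (h : HasNegCycleOn A s) :
    ∃ a ∈ s, ∃ b ∈ s, A a b < 0 := by
  obtain ⟨m, hm, c, -, hs, -, hprod⟩ := h
  by_contra! hnn
  exact hprod.not_ge <| Finset.prod_nonneg fun p hp =>
    hnn _ (hs p (Finset.mem_range.mp hp)) _ (hs _ (Nat.mod_lt _ (by omega)))

lemma HasNegCycleOn.congr_of_ne_zero {s : Set (Fin n)} (h : HasNegCycleOn A s)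
    (hAB : ∀ a ∈ s, ∀ b ∈ s, A a b ≠ 0 → B a b = A a b) : HasNegCycleOn B s := by
  obtain ⟨m, hm, c, hinj, hs, hne, hprod⟩ := h
  have hedge : ∀ p < m, B (c p) (c ((p + 1) % m)) = A (c p) (c ((p + 1) % m)) := fun p hp =>
    hAB _ (hs p hp) _ (hs _ (Nat.mod_lt _ (by omega))) (hne p hp)
  refine ⟨m, hm, c, hinj, hs, fun p hp => hedge p hp ▸ hne p hp, ?_⟩
  rwa [Finset.prod_congr rfl fun p hp => hedge p (Finset.mem_range.mp hp)]

lemma hasNegCycleOn_of_triangle {s : Set (Fin n)} {a b c : Fin n} (ha : a ∈ s) (hb : b ∈ s)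
    (hc : c ∈ s) (hab : a ≠ b) (hbc : b ≠ c) (hca : c ≠ a) (hneg : A a b * A b c * A c a < 0) :
    HasNegCycleOn A s := by
  have hne : A a b ≠ 0 ∧ A b c ≠ 0 ∧ A c a ≠ 0 := by
    refine ⟨?_, ?_, ?_⟩ <;> rintro h <;> simp [h] at hneg
  refine ⟨3, le_rfl, fun p => if p = 0 then a else if p = 1 then b else c, ?_, ?_, ?_, ?_⟩
  · intro p hp q hq hpq
    interval_cases p <;> interval_cases q <;> simp_all [eq_comm]
  · intro p hp
    interval_cases p <;> simpa
  · intro p hp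
    interval_cases p <;> simp [hne]
  · simpa [Finset.prod_range_succ] using hneg

lemma IsKmMinus.of_eqOn {m : ℕ} {s : Finset (Fin n)} (h : IsKmMinus B m s)
    (hAB : ∀ a ∈ s, ∀ b ∈ s, A a b = B a b) : IsKmMinus A m s :=
  ⟨h.1, fun a ha b hb hab => hAB a ha b hb ▸ h.2.1 a ha b hb hab,
    h.2.2.congr_of_ne_zero fun a ha b hb _ => hAB a ha b hb⟩

lemma IsKmMinus.apply_ne_zero_of_neg_edge {m : ℕ} {s : Finset (Fin n)} {u w c : Fin n}
    (h : IsKmMinus A m s) (hneg : ∀ a b, A a b < 0 → (a = u ∧ b = w) ∨ (a = w ∧ b = u))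
    (hc : c ∈ s) (hcw : c ≠ w) : A w c ≠ 0 := by
  obtain ⟨a, ha, b, hb, hab⟩ := h.2.2.exists_neg_entry
  have hw : w ∈ s := by
    rcases hneg a b hab with ⟨-, rfl⟩ | ⟨rfl, -⟩ <;> assumption
  exact h.2.1 w hw c hc hcw.symm

lemma TK4Free.of_isK4Minus_imp {t : ℕ} (h : TK4Free t A)
    (hAB : ∀ s, IsK4Minus B s → IsK4Minus A s) : TK4Free t B :=
  (Set.ncard_le_ncard hAB (Set.toFinite _)).trans_lt h

end Cycles

section GammaSN

lemma isSignedGraph_gammaSN (s n : ℕ) : IsSignedGraph (GammaSN s n) := by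
  refine ⟨?_, fun i => by simp [GammaSN], fun i j => ?_⟩
  · ext i j
    simp only [transpose_apply, GammaSN, eq_comm (a := j), and_comm (a := j.val ≠ n - 1),
      min_comm j.val]
  · simp only [GammaSN]
    split_ifs <;> norm_num

variable {n : ℕ}

lemma gammaSN_apply_of_ne_last {s : ℕ} {a b : Fin n} (hab : a ≠ b) (ha : a.val ≠ n - 1)
    (hb : b.val ≠ n - 1) : GammaSN s n a b = 1 := by
  simp [GammaSN, hab, ha, hb]

lemma gammaSN_last_apply (hn : 4 ≤ n) (b : Fin n) :
    GammaSN 2 n ⟨n - 1, by omega⟩ b = if b.val = 0 then -1 else if b.val ≤ 2 then 1 else 0 := by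
  simp only [GammaSN, Fin.ext_iff]
  split_ifs <;> first | rfl | omega

lemma vals_of_gammaSN_apply_neg {s : ℕ} {a b : Fin n} (h : GammaSN s n a b < 0) :
    (a.val = 0 ∧ b.val = n - 1) ∨ (a.val = n - 1 ∧ b.val = 0) := by
  have := a.isLt
  have := b.isLt
  simp only [GammaSN, Fin.ext_iff] at h
  split_ifs at h <;> first | omega | norm_num at h

lemma isUnbalanced_gammaSN (hn : 4 ≤ n) : IsUnbalanced (GammaSN 2 n) := by
  have h0n : GammaSN 2 n ⟨0, by omega⟩ ⟨n - 1, by omega⟩ = -1 := by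
    rw [(isSignedGraph_gammaSN 2 n).1.apply, gammaSN_last_apply hn]; rfl
  have hn1 : GammaSN 2 n ⟨n - 1, by omega⟩ ⟨1, by omega⟩ = 1 := by
    rw [gammaSN_last_apply hn]; rfl
  have h10 : GammaSN 2 n ⟨1, by omega⟩ ⟨0, by omega⟩ = 1 :=
    gammaSN_apply_of_ne_last (by simp) (by simp; omega) (by simp; omega)
  refine hasNegCycleOn_of_triangle trivial trivial trivial ?_ ?_ ?_
    (by rw [h0n, hn1, h10]; norm_num) <;> simp [Fin.ext_iff] <;> omega

lemma tk4Free_gammaSN (hn : 4 ≤ n) {t : ℕ} (ht : 2 ≤ t) : TK4Free t (GammaSN 2 n) := by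
  set z : ℕ → Fin n := fun k => ⟨min k (n - 1), by omega⟩
  have hneg : ∀ a b, GammaSN 2 n a b < 0 →
      (a = z 0 ∧ b = z (n - 1)) ∨ (a = z (n - 1) ∧ b = z 0) := fun a b h => by
    simpa [Fin.ext_iff, z] using vals_of_gammaSN_apply_neg h
  have hsub : {s | IsK4Minus (GammaSN 2 n) s} ⊆ {{z 0, z 1, z 2, z (n - 1)}} := by
    intro s hs
    refine Finset.eq_of_subset_of_card_le (fun c hc => ?_) (Finset.card_le_four.trans hs.1.ge)
    by_cases hcn : c = z (n - 1)
    · simp [hcn]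
    have hc := hs.apply_ne_zero_of_neg_edge hneg hc hcn
    rw [show z (n - 1) = ⟨n - 1, by omega⟩ by simp [z], gammaSN_last_apply hn] at hc
    have := c.isLt
    simp only [Finset.mem_insert, Finset.mem_singleton, Fin.ext_iff, z, min_self] at hcn ⊢
    split_ifs at hc <;> first | omega | exact absurd rfl hc
  calc {s | IsK4Minus (GammaSN 2 n) s}.ncard ≤ 1 := by
        simpa using Set.ncard_le_ncard hsub (Set.finite_singleton _)
    _ < t := by omega

lemma sub_two_lt_lambdaMax_gammaSN (hn : 4 ≤ n) : (n : ℝ) - 2 < lambdaMax (GammaSN 2 n) := by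
  obtain ⟨hsymm, hdiag, -⟩ := isSignedGraph_gammaSN 2 n
  refine sub_two_lt_lambdaMax hsymm hdiag (v := ⟨n - 1, by omega⟩)
    (fun a b hab ha hb => gammaSN_apply_of_ne_last hab (by simpa [Fin.ext_iff] using ha)
      (by simpa [Fin.ext_iff] using hb)) ?_
  simp only [gammaSN_last_apply hn]
  rw [Fin.sum_univ_eq_sum_range (fun k => if k = 0 then (-1 : ℝ) else if k ≤ 2 then 1 else 0)]
  obtain ⟨m, rfl⟩ : ∃ m, n = m + 3 := ⟨n - 3, by omega⟩
  rw [Finset.sum_range_succ', Finset.sum_range_succ', Finset.sum_range_succ',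
    Finset.sum_eq_zero fun k _ => by rw [if_neg (by omega), if_neg (by omega)]]
  norm_num

end GammaSN

section AddEdge

variable {n : ℕ} {A : Matrix (Fin n) (Fin n) ℝ} {i j : Fin n}

def addPosEdge (A : Matrix (Fin n) (Fin n) ℝ) (i j : Fin n) : Matrix (Fin n) (Fin n) ℝ :=
  A + single i j 1 + single j i 1

lemma addPosEdge_apply (a b : Fin n) : addPosEdge A i j a b =
    A a b + (if i = a ∧ j = b then 1 else 0) + (if j = a ∧ i = b then 1 else 0) := by
  simp [addPosEdge, single_apply]

lemma le_addPosEdge_apply (a b : Fin n) : A a b ≤ addPosEdge A i j a b := by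
  rw [addPosEdge_apply]
  split_ifs <;> linarith

lemma addPosEdge_apply_of_ne {a b : Fin n} (ha : a ≠ i) (hb : b ≠ i) :
    addPosEdge A i j a b = A a b := by
  simp [addPosEdge_apply, ha.symm, hb.symm]

lemma Matrix.IsSymm.addPosEdge (hA : A.IsSymm) : (addPosEdge A i j).IsSymm := by
  simp only [Matrix.IsSymm, _root_.addPosEdge, transpose_add, transpose_single, hA.eq]
  abel

lemma IsSignedGraph.addPosEdge (hA : IsSignedGraph A) (hij : i ≠ j) (h0 : A i j = 0) :
    IsSignedGraph (addPosEdge A i j) := by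
  obtain ⟨hsymm, hdiag, hent⟩ := hA
  refine ⟨hsymm.addPosEdge, fun a => ?_, fun a b => ?_⟩
  · have hi : ¬(i = a ∧ j = a) := fun h => hij (h.1.trans h.2.symm)
    have hj : ¬(j = a ∧ i = a) := fun h => hij (h.2.trans h.1.symm)
    simp [addPosEdge_apply, hdiag, hi, hj]
  · rw [addPosEdge_apply]
    have h0' : A j i = 0 := by rw [hsymm.apply, h0]
    split_ifs with h1 h2 h2
    · exact absurd (h1.1.trans h2.1.symm) hij
    · obtain ⟨rfl, rfl⟩ := h1; simp [h0]
    · obtain ⟨rfl, rfl⟩ := h2; simp [h0']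
    · simpa using hent a b

lemma dotProduct_addPosEdge_mulVec (x : Fin n → ℝ) :
    x ⬝ᵥ addPosEdge A i j *ᵥ x = x ⬝ᵥ A *ᵥ x + 2 * (x i * x j) := by
  simp only [addPosEdge, add_mulVec, single_mulVec_eq, one_mul, dotProduct_add, dotProduct_smul,
    dotProduct_single, mul_one, smul_eq_mul]
  ring

lemma IsUnbalanced.addPosEdge (h : IsUnbalanced A) (hA : A.IsSymm) (h0 : A i j = 0) :
    IsUnbalanced (addPosEdge A i j) := by
  refine h.congr_of_ne_zero fun a _ b _ hab => ?_
  have h0' : A j i = 0 := by rw [hA.apply, h0]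
  rw [addPosEdge_apply, if_neg, if_neg, add_zero, add_zero]
  · rintro ⟨rfl, rfl⟩; exact hab h0'
  · rintro ⟨rfl, rfl⟩; exact hab h0

lemma TK4Free.addPosEdge {t : ℕ} {u w : Fin n} (h : TK4Free t A)
    (hneg : ∀ a b, A a b < 0 → (a = u ∧ b = w) ∨ (a = w ∧ b = u)) (hwi : A w i = 0)
    (hiw : i ≠ w) (hjw : j ≠ w) : TK4Free t (addPosEdge A i j) := by
  refine h.of_isK4Minus_imp fun s hs => ?_
  have hi : i ∉ s := fun hi => hs.apply_ne_zero_of_neg_edge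
    (fun a b hab => hneg a b ((le_addPosEdge_apply a b).trans_lt hab)) hi hiw
    (by simp [addPosEdge_apply, hwi, hiw, hjw])
  exact hs.of_eqOn fun a ha b hb =>
    (addPosEdge_apply_of_ne (ne_of_mem_of_not_mem ha hi) (ne_of_mem_of_not_mem hb hi)).symm

lemma lambdaMax_lt_lambdaMax_addPosEdge (hA : A.IsSymm) {x : Fin n → ℝ}
    (heig : A *ᵥ x = lambdaMax A • x) (hx : x ⬝ᵥ x = 1) (hxi : 0 < x i) (hxj : 0 < x j) :
    lambdaMax A < lambdaMax (addPosEdge A i j) :=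
  calc lambdaMax A < lambdaMax A + 2 * (x i * x j) := by have := mul_pos hxi hxj; linarith
    _ = x ⬝ᵥ addPosEdge A i j *ᵥ x := by
      rw [dotProduct_addPosEdge_mulVec, heig, dotProduct_smul, hx, smul_eq_mul, mul_one]
    _ ≤ lambdaMax (addPosEdge A i j) * (x ⬝ᵥ x) := dotProduct_mulVec_le_lambdaMax hA.addPosEdge x
    _ = lambdaMax (addPosEdge A i j) := by rw [hx, mul_one]

end AddEdge

lemma IsSignedGraph.apply_le_one {n : ℕ} {A : Matrix (Fin n) (Fin n) ℝ} (hA : IsSignedGraph A)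
    (a b : Fin n) : A a b ≤ 1 := by
  rcases hA.2.2 a b with h | h | h <;> rw [h] <;> norm_num

lemma IsSignedGraph.pos_of_mulVec_eq_smul {n : ℕ} {A : Matrix (Fin n) (Fin n) ℝ}
    (hA : IsSignedGraph A) {x : Fin n → ℝ} {μ : ℝ} (hμ : (n : ℝ) - 2 < μ) (hx0 : ∀ k, 0 ≤ x k)
    (hx : x ≠ 0) (heig : A *ᵥ x = μ • x) (k : Fin n) : 0 < x k := by
  -- If `x k = 0`, the row of a largest entry `x m` has at most `n - 2` nonzero terms `≤ x m`.
  refine (hx0 k).lt_of_ne' fun hk => ?_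
  obtain ⟨m, -, hm⟩ := Finset.exists_max_image Finset.univ x ⟨k, Finset.mem_univ k⟩
  have hxm : 0 < x m := by
    obtain ⟨l, hl⟩ := Function.ne_iff.mp hx
    exact ((hx0 l).lt_of_ne' hl).trans_le (hm l (Finset.mem_univ l))
  have hmk : m ≠ k := by rintro rfl; exact hxm.ne' hk
  set S := (Finset.univ.erase m).erase k
  have hS : (S.card : ℝ) = n - 2 := by
    have : S.card + 1 + 1 = n := by
      rw [Finset.card_erase_add_one (Finset.mem_erase.mpr ⟨hmk.symm, Finset.mem_univ k⟩),
        Finset.card_erase_add_one (Finset.mem_univ m), Finset.card_univ, Fintype.card_fin]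
    have : (S.card : ℝ) + 1 + 1 = n := by exact_mod_cast this
    linarith
  have hsum : μ * x m ≤ (n - 2) * x m := calc
    μ * x m = ∑ l, A m l * x l := by simpa [mulVec, dotProduct] using (congrFun heig m).symm
    _ = ∑ l ∈ S, A m l * x l := by
      refine (Finset.sum_subset (Finset.subset_univ S) fun l _ hl => ?_).symm
      obtain rfl | rfl : l = k ∨ l = m := by simp only [S, Finset.mem_erase] at hl; tauto
      · rw [hk, mul_zero]
      · rw [hA.2.1, zero_mul]
    _ ≤ ∑ l ∈ S, x m := Finset.sum_le_sum fun l _ =>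
      (mul_le_of_le_one_left (hx0 l) (hA.apply_le_one m l)).trans (hm l (Finset.mem_univ l))
    _ = (n - 2) * x m := by rw [Finset.sum_const, nsmul_eq_mul, hS]
  nlinarith

theorem extremal_private_neighborhood_clique (t : ℕ) (ht : 2 ≤ t) :
    ∃ N : ℕ, ∀ n : ℕ, ∀ _hn : N + 4 ≤ n, t ≤ (n - 2).choose 2 →
      ∀ (A : Matrix (Fin n) (Fin n) ℝ) (x : Fin n → ℝ),
        IsSignedGraph A → IsUnbalanced A → TK4Free t A →
        (∀ B : Matrix (Fin n) (Fin n) ℝ,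
          IsSignedGraph B → IsUnbalanced B → TK4Free t B → lambdaMax B ≤ lambdaMax A) →
        (∀ i, 0 ≤ x i) → (∑ i, x i ^ 2) = 1 → A.mulVec x = lambdaMax A • x →
        let v1 : Fin n := ⟨0, by omega⟩
        let v2 : Fin n := ⟨1, by omega⟩
        let vn : Fin n := ⟨n - 1, by omega⟩
        A v1 vn < 0 →
        (∀ i j : Fin n, A i j < 0 → (i = v1 ∧ j = vn) ∨ (i = vn ∧ j = v1)) →
        x vn ≤ x v1 →
        ∀ i j : Fin n, i ≠ j →
          A v1 i ≠ 0 → A vn i = 0 → i ≠ vn →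
          A v1 j ≠ 0 → A vn j = 0 → j ≠ vn →
          0 < A i j := by
  refine ⟨0, ?_⟩
  intro n hn _ A x hA hunb hfree hmax hx0 hx1 heig v1 _ vn _ hneg _ i j hij _ hni hivn _ _ hjvn
  have hn4 : 4 ≤ n := by omega
  have hindex : (n : ℝ) - 2 < lambdaMax A := (sub_two_lt_lambdaMax_gammaSN hn4).trans_le <|
    hmax _ (isSignedGraph_gammaSN 2 n) (isUnbalanced_gammaSN hn4) (tk4Free_gammaSN hn4 ht)
  have hxx : x ⬝ᵥ x = 1 := by simpa [dotProduct, sq] using hx1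
  have hxpos := hA.pos_of_mulVec_eq_smul hindex hx0 (by rintro rfl; simp at hxx) heig
  rcases hA.2.2 i j with hAij | hAij | hAij
  · rcases hneg i j (by rw [hAij]; norm_num) with ⟨-, hj⟩ | ⟨hi, -⟩
    exacts [absurd hj hjvn, absurd hi hivn]
  · exact absurd (hmax _ (hA.addPosEdge hij hAij) (hunb.addPosEdge hA.1 hAij)
      (hfree.addPosEdge hneg hni hivn hjvn))
      (lambdaMax_lt_lambdaMax_addPosEdge hA.1 heig hxx (hxpos i) (hxpos j)).not_ge
  · rw [hAij]
    exact one_pos
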